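/- arXiv:1306.0485 — 5 statements merged into one kernel-verified Lean document; each statement's English description precedes it below -/
import Mathlib

section
/- Let K be a field and r, s ∈ K× such that the only pair (p,q) ∈ ℤ² with r^p = s^q is (0,0). Let D = K[ρ^{±1}, σ^{±1}} be the Laurent polynomial ring in two variables and let φ be the K-algebra automorphism of D with φ(ρ) = r^{-1}ρ and φ(σ) = s^{-1}σ. Then the only φ-invariant ideals of D are 0 and D. -/
/-!
`φ` acts diagonally on the monomial basis of `D`: it scales `ρᵐσⁿ` by `r⁻ᵐs⁻ⁿ`, and the
hypothesis on `r, s` says exactly that these eigenvalues are pairwise distinct. If `J ≠ 0`, pick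
`f ∈ J` nonzero with fewest monomials and a monomial `a` of `f`, with eigenvalue `λ`; then
`φ f - λ f ∈ J` has strictly fewer monomials, so it vanishes. Hence `f` is a single monomial,
which is a unit of `D`.
-/

/-- The Laurent polynomial algebra `K[ρ^{±1}, σ^{±1}]` in two variables. -/
abbrev LaurentTwo (K : Type*) [Field K] : Type _ := AddMonoidAlgebra K (ℤ × ℤ)

/-- The generator ρ. -/
noncomputable def Lρ (K : Type*) [Field K] : LaurentTwo K := AddMonoidAlgebra.single (1, 0) 1

/-- The generator σ. -/
noncomputable def Lσ (K : Type*) [Field K] : LaurentTwo K := AddMonoidAlgebra.single (0, 1) 1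

open AddMonoidAlgebra Function

namespace AddMonoidAlgebra

variable {K G : Type*} [Field K]

section AddGroup

variable [AddGroup G]

theorem isUnit_single {a : G} {c : K} (hc : c ≠ 0) : IsUnit (single a c : AddMonoidAlgebra K G) :=
  ⟨⟨single a c, single (-a) c⁻¹, by simp [hc, one_def], by simp [hc, one_def]⟩, rfl⟩

theorem support_coeff_sub_smul [DecidableEq G] {χ : G → K} (hχ : Injective χ)
    {f g : AddMonoidAlgebra K G} (hg : ∀ b, g.coeff b = χ b * f.coeff b) (a : G) :
    (g - χ a • f).coeff.support = f.coeff.support.erase a := by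
  ext b
  have hcoeff : (g - χ a • f).coeff b = (χ b - χ a) * f.coeff b := by
    rw [coeff_sub, Finsupp.sub_apply, coeff_smul_apply, hg, smul_eq_mul, sub_mul]
  rw [Finsupp.mem_support_iff, hcoeff, Finset.mem_erase, Finsupp.mem_support_iff, mul_ne_zero_iff,
    sub_ne_zero, hχ.ne_iff]

theorem ideal_eq_bot_or_eq_top_of_coeff_scaling {χ : G → K} (hχ : Injective χ)
    (φ : AddMonoidAlgebra K G → AddMonoidAlgebra K G)
    (hφ : ∀ f b, (φ f).coeff b = χ b * f.coeff b)
    (J : Ideal (AddMonoidAlgebra K G)) (hJ : ∀ f ∈ J, φ f ∈ J) : J = ⊥ ∨ J = ⊤ := by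
  classical
  refine or_iff_not_imp_left.mpr fun hJ₀ => ?_
  obtain ⟨f, hfJ, hf₀⟩ := Submodule.exists_mem_ne_zero_of_ne_bot hJ₀
  induction hn : f.coeff.support.card using Nat.strong_induction_on generalizing f with
  | _ n ih =>
    obtain ⟨a, ha⟩ : f.coeff.support.Nonempty := by simpa using hf₀
    by_cases hmono : f.coeff.support ⊆ {a}
    · have hf : f = single a (f.coeff a) :=
        coeff_injective (Finsupp.support_subset_singleton.mp hmono)
      exact Ideal.eq_top_of_isUnit_mem J hfJ (hf ▸ isUnit_single (Finsupp.mem_support_iff.mp ha))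
    obtain ⟨b, hb, hba⟩ := Finset.not_subset.mp hmono
    have hsupp := support_coeff_sub_smul hχ (hφ f) a
    refine ih _ ?_ (φ f - χ a • f) (J.sub_mem (hJ f hfJ) (J.smul_of_tower_mem _ hfJ)) ?_ rfl
    · rw [hsupp, ← hn]
      exact Finset.card_erase_lt_of_mem ha
    · intro h
      have hb' : b ∈ (φ f - χ a • f).coeff.support :=
        hsupp ▸ Finset.mem_erase.mpr ⟨Finset.notMem_singleton.mp hba, hb⟩
      simp [h] at hb'

def scalingSubgroup (φ : AddMonoidAlgebra K G →ₐ[K] AddMonoidAlgebra K G) (ψ : AddChar G K) :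
    AddSubgroup G where
  carrier := {a | φ (single a 1) = single a (ψ a)}
  zero_mem' := by simp [← one_def]
  add_mem' {a b} ha hb := by
    simp only [Set.mem_ofPred_eq] at ha hb ⊢
    rw [← one_mul (1 : K), ← single_mul_single, map_mul, ha, hb, single_mul_single,
      AddChar.map_add_eq_mul]
  neg_mem' {a} ha := by
    simp only [Set.mem_ofPred_eq] at ha ⊢
    have hinv : single a (ψ a) * single (-a) (ψ (-a)) = 1 := by
      rw [single_mul_single, ← AddChar.map_add_eq_mul, add_neg_cancel, AddChar.map_zero_eq_one,
        one_def]
    calc φ (single (-a) 1) = φ (single (-a) 1) * (φ (single a 1) * single (-a) (ψ (-a))) := by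
          rw [ha, hinv, mul_one]
      _ = single (-a) (ψ (-a)) := by
          rw [← mul_assoc, ← map_mul, single_mul_single, neg_add_cancel, mul_one, ← one_def,
            map_one, one_mul]

theorem coeff_map_of_map_single (φ : AddMonoidAlgebra K G →ₗ[K] AddMonoidAlgebra K G)
    {χ : G → K} (hφ : ∀ a, φ (single a 1) = single a (χ a)) (f : AddMonoidAlgebra K G) (b : G) :
    (φ f).coeff b = χ b * f.coeff b := by
  classical
  induction f using induction_linear with
  | zero => simp
  | add f g hf hg => simp [hf, hg, mul_add]
  | single a c =>
    have hsingle : single a c = c • single a (1 : K) := by rw [smul_single, smul_eq_mul, mul_one]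
    rw [hsingle, map_smul, hφ, coeff_smul_apply, coeff_smul_apply, coeff_single, coeff_single,
      Finsupp.single_apply, Finsupp.single_apply]
    split_ifs with h
    · rw [h, smul_eq_mul, smul_eq_mul, mul_one, mul_comm]
    · simp

end AddGroup

theorem scalingSubgroup_eq_top (φ : AddMonoidAlgebra K (ℤ × ℤ) →ₐ[K] AddMonoidAlgebra K (ℤ × ℤ))
    (ψ : AddChar (ℤ × ℤ) K) (h₁ : (1, 0) ∈ scalingSubgroup φ ψ)
    (h₂ : (0, 1) ∈ scalingSubgroup φ ψ) :
    scalingSubgroup φ ψ = ⊤ := by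
  refine eq_top_iff.mpr fun a _ => ?_
  have ha : a = a.1 • ((1, 0) : ℤ × ℤ) + a.2 • (0, 1) := by ext <;> simp
  rw [ha]
  exact add_mem (zsmul_mem h₁ _) (zsmul_mem h₂ _)

end AddMonoidAlgebra

def invZPowChar {K : Type*} [Field K] (r s : Kˣ) : AddChar (ℤ × ℤ) K where
  toFun a := ↑(r ^ (-a.1) * s ^ (-a.2))
  map_zero_eq_one' := by simp
  map_add_eq_mul' a b := by
    simp only [Prod.fst_add, Prod.snd_add, neg_add, zpow_add, Units.val_mul]
    ring

theorem invZPowChar_injective {K : Type*} [Field K] {r s : Kˣ}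
    (hrs : ∀ p q : ℤ, (r : K) ^ p = (s : K) ^ q → p = 0 ∧ q = 0) :
    Injective (invZPowChar r s) := by
  refine AddChar.injective_iff.mpr fun a ha => ?_
  have hpow : (r : K) ^ (-a.1) = (s : K) ^ a.2 := by
    have : r ^ (-a.1) = s ^ a.2 := by
      rw [← mul_inv_eq_one, ← zpow_neg]
      exact Units.val_eq_one.mp ha
    simpa using congrArg Units.val this
  obtain ⟨h₁, h₂⟩ := hrs _ _ hpow
  ext <;> simp_all

/-- if `r^p = s^q` (for integers `p,q`) only when `(p,q) = (0,0)`, and `φ`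
is the `K`-algebra automorphism of `D = K[ρ^{±1},σ^{±1}]` with `φ(ρ) = r⁻¹ρ`,
`φ(σ) = s⁻¹σ`, then the only `φ`-invariant ideals of `D` are `0` and `D`. -/
theorem stmt2 {K : Type*} [Field K] (r s : K) (hr : r ≠ 0) (hs : s ≠ 0)
    (hrs : ∀ p q : ℤ, r ^ p = s ^ q → p = 0 ∧ q = 0)
    (φ : LaurentTwo K ≃ₐ[K] LaurentTwo K)
    (hφρ : φ (Lρ K) = r⁻¹ • Lρ K) (hφσ : φ (Lσ K) = s⁻¹ • Lσ K) :
    ∀ J : Ideal (LaurentTwo K), (∀ a ∈ J, φ a ∈ J) → J = ⊥ ∨ J = ⊤ := by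
  set ψ := invZPowChar (Units.mk0 r hr) (Units.mk0 s hs)
  have hψ : Injective ψ := invZPowChar_injective (by simpa using hrs)
  have hscale : scalingSubgroup φ.toAlgHom ψ = ⊤ := by
    apply scalingSubgroup_eq_top
    · simpa [scalingSubgroup, ψ, invZPowChar, Lρ, smul_single] using hφρ
    · simpa [scalingSubgroup, ψ, invZPowChar, Lσ, smul_single] using hφσ
  have hsingle : ∀ a, φ (single a 1) = single a (ψ a) := fun a => hscale.ge (AddSubgroup.mem_top a)
  exact ideal_eq_bot_or_eq_top_of_coeff_scaling hψ φ (coeff_map_of_map_single φ.toLinearMap hsingle)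
end

section
/- Let K be a field, r, s ∈ K× with r^2 ≠ s^2 and r,s satisfying the condition that r^p = s^q for integers p,q implies p=q=0. Let D = K[ρ^{±1},σ^{±1}], φ the automorphism with φ(ρ)=r^{-1}ρ, φ(σ)=s^{-1}σ, and t = (r^2ρ^2 - s^2σ^2)/(r^2 - s^2) ∈ D. Then for every positive integer m, the ideal generated by t and φ^m(t) is all of D, i.e., tD + φ^m(t)D = D. -/
/-- The element `t = (r²ρ² - s²σ²)/(r² - s²)`. -/
noncomputable def Lt (K : Type*) [Field K] (r s : K) : LaurentTwo K :=
  (r ^ 2 - s ^ 2)⁻¹ • (r ^ 2 • (Lρ K * Lρ K) - s ^ 2 • (Lσ K * Lσ K))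

theorem AlgEquiv.pow_apply_eq_pow_smul {R A : Type*} [CommSemiring R] [Semiring A] [Algebra R A]
    (φ : A ≃ₐ[R] A) {c : R} {x : A} (hx : φ x = c • x) (m : ℕ) : (φ ^ m) x = c ^ m • x := by
  induction m with
  | zero => simp
  | succ n ih => rw [pow_succ', AlgEquiv.mul_apply, ih, map_smul, hx, smul_smul, pow_succ]

theorem pow_ne_pow_of_forall_zpow_eq_zpow {G : Type*} [DivInvMonoid G] {r s : G}
    (hrs : ∀ p q : ℤ, r ^ p = s ^ q → p = 0 ∧ q = 0) {n : ℕ} (hn : n ≠ 0) : r ^ n ≠ s ^ n := by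
  intro h
  have := (hrs n n (by rwa [zpow_natCast, zpow_natCast])).1
  omega

theorem isUnit_Lρ (K : Type*) [Field K] : IsUnit (Lρ K) :=
  (Group.isUnit (Multiplicative.ofAdd ((1, 0) : ℤ × ℤ))).map (AddMonoidAlgebra.of K (ℤ × ℤ))

theorem map_Lt_of_map_eq_smul {K : Type*} [Field K] (r s : K) (ψ : LaurentTwo K ≃ₐ[K] LaurentTwo K)
    {u v : K} (hψρ : ψ (Lρ K) = u • Lρ K) (hψσ : ψ (Lσ K) = v • Lσ K) :
    ψ (Lt K r s) = (r ^ 2 - s ^ 2)⁻¹ •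
      (r ^ 2 • u ^ 2 • (Lρ K * Lρ K) - s ^ 2 • v ^ 2 • (Lσ K * Lσ K)) := by
  rw [Lt, map_smul, map_sub, map_smul, map_smul, map_mul, map_mul, hψρ, hψσ,
    smul_mul_smul_comm, smul_mul_smul_comm, ← sq u, ← sq v]

theorem smul_Lt_sub_eq_smul_Lρ_mul_self {K : Type*} [Field K] (r s α β : K) :
    α • Lt K r s - (r ^ 2 - s ^ 2)⁻¹ • (r ^ 2 • β • (Lρ K * Lρ K) - s ^ 2 • α • (Lσ K * Lσ K)) =
      ((r ^ 2 - s ^ 2)⁻¹ * r ^ 2 * (α - β)) • (Lρ K * Lρ K) := by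
  rw [Lt]
  module

theorem stmt3_general {K : Type*} [Field K] (r s : K) (hr : r ≠ 0)
    (hrs2 : r ^ 2 ≠ s ^ 2) (hrs : ∀ p q : ℤ, r ^ p = s ^ q → p = 0 ∧ q = 0)
    (φ : LaurentTwo K ≃ₐ[K] LaurentTwo K)
    (hφρ : φ (Lρ K) = r⁻¹ • Lρ K) (hφσ : φ (Lσ K) = s⁻¹ • Lσ K) :
    ∀ m : ℕ, 0 < m →
      Ideal.span {Lt K r s, (φ ^ m : LaurentTwo K ≃ₐ[K] LaurentTwo K) (Lt K r s)} = ⊤ := by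
  intro m hm
  have hφmt := map_Lt_of_map_eq_smul r s (φ ^ m)
    (φ.pow_apply_eq_pow_smul hφρ m) (φ.pow_apply_eq_pow_smul hφσ m)
  have hcoeff : (r ^ 2 - s ^ 2)⁻¹ * r ^ 2 * ((s⁻¹ ^ m) ^ 2 - (r⁻¹ ^ m) ^ 2) ≠ 0 := by
    refine mul_ne_zero (mul_ne_zero (inv_ne_zero (sub_ne_zero.2 hrs2)) (pow_ne_zero 2 hr)) ?_
    rw [sub_ne_zero, ← pow_mul, ← pow_mul, inv_pow, inv_pow, Ne, inv_inj]
    exact (pow_ne_pow_of_forall_zpow_eq_zpow hrs (by omega)).symm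
  refine Ideal.eq_top_of_isUnit_mem _ (x := (s⁻¹ ^ m) ^ 2 • Lt K r s - (φ ^ m) (Lt K r s)) ?_ ?_
  · exact sub_mem (Submodule.smul_of_tower_mem _ _ (Ideal.subset_span (by simp)))
      (Ideal.subset_span (by simp))
  · rw [hφmt, smul_Lt_sub_eq_smul_Lρ_mul_self, Algebra.smul_def]
    exact (hcoeff.isUnit.map _).mul ((isUnit_Lρ K).mul (isUnit_Lρ K))

/-- with `t = (r²ρ² - s²σ²)/(r² - s²)` and `φ(ρ) = r⁻¹ρ`, `φ(σ) = s⁻¹σ`,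
for every positive integer `m` we have `tD + φ^m(t)D = D`. -/
theorem stmt3 {K : Type*} [Field K] (r s : K) (hr : r ≠ 0) (hs : s ≠ 0)
    (hrs2 : r ^ 2 ≠ s ^ 2) (hrs : ∀ p q : ℤ, r ^ p = s ^ q → p = 0 ∧ q = 0)
    (φ : LaurentTwo K ≃ₐ[K] LaurentTwo K)
    (hφρ : φ (Lρ K) = r⁻¹ • Lρ K) (hφσ : φ (Lσ K) = s⁻¹ • Lσ K) :
    ∀ m : ℕ, 0 < m →
      Ideal.span {Lt K r s, (φ ^ m : LaurentTwo K ≃ₐ[K] LaurentTwo K) (Lt K r s)} = ⊤ :=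
  stmt3_general r s hr hrs2 hrs φ hφρ hφσ
end

section
/- Let K be a field, n ≥ 1, and r_i, s_i ∈ K× (1 ≤ i ≤ n) with r_i^2 ≠ s_i^2. On the polynomial space P(n) = K[z_1,…,z_n] with monomial basis z(k) = z_1^{k_1}⋯z_n^{k_n}, define operators for each i: ρ_i·z(k) = r_i^{k_i} z(k), σ_i·z(k) = s_i^{k_i} z(k), x_i·z(k) = z(k+ε_i), y_i·z(k) = [k_i]_i z(k−ε_i) where [m]_i = (r_i^{2m} − s_i^{2m})/(r_i^2 − s_i^2) and z(k−ε_i) = 0 if k_i = 0. Then these operators satisfy the defining relations (R1)–(R5) of the multiparameter Weyl algebra A_{r,s}(n); in particular y_i x_i − r_i^2 x_i y_i = σ_i^2 and y_i x_i − s_i^2 x_i y_i = ρ_i^2 as operators on P(n). -/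
/-!
Each operator sends a monomial `z(k)` to a scalar multiple of a single monomial, so every
relation can be checked on the monomial basis, where it becomes an identity of scalars. The only
nontrivial one is the recurrence `[m+1] - r² [m] = s^{2m}` of the quantum integers, which gives
`(y x - r² x y) z(k) = s^{2k} z(k) = σ² z(k)`; the companion relation with `s²` and `ρ²` is the
same statement with `r` and `s` exchanged, because `[m]` is symmetric in `r` and `s`.
-/

/-- Build a linear operator on `ι →₀ K` from its values on the basis. -/
noncomputable def mkOp {K : Type*} [Field K] {ι : Type*} (f : ι → (ι →₀ K)) :
    (ι →₀ K) →ₗ[K] (ι →₀ K) :=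
  Finsupp.lsum K fun k => LinearMap.toSpanSingleton K (ι →₀ K) (f k)

/-- The quantum-type integer `[m] = (r^{2m} - s^{2m})/(r² - s²)`. -/
noncomputable def qint {K : Type*} [Field K] (r s : K) (m : ℕ) : K :=
  (r ^ (2 * m) - s ^ (2 * m)) / (r ^ 2 - s ^ 2)

section ops
variable {K : Type*} [Field K] {n : ℕ}

/-- `ρ_i z(k) = r_i^{k_i} z(k)` (with eigenvalue parameter `r`). -/
noncomputable def rhoOp (r : Fin n → K) (i : Fin n) :
    ((Fin n → ℕ) →₀ K) →ₗ[K] ((Fin n → ℕ) →₀ K) :=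
  mkOp fun k => Finsupp.single k (r i ^ k i)

/-- inverse of `rhoOp`. -/
noncomputable def rhoInvOp (r : Fin n → K) (i : Fin n) :
    ((Fin n → ℕ) →₀ K) →ₗ[K] ((Fin n → ℕ) →₀ K) :=
  mkOp fun k => Finsupp.single k ((r i)⁻¹ ^ k i)

/-- `x_i z(k) = z(k + ε_i)`. -/
noncomputable def xOp (i : Fin n) :
    ((Fin n → ℕ) →₀ K) →ₗ[K] ((Fin n → ℕ) →₀ K) :=
  mkOp fun k => Finsupp.single (Function.update k i (k i + 1)) (1 : K)

/-- `y_i z(k) = [k_i]_i z(k - ε_i)` (zero when `k_i = 0`, since `[0] = 0`). -/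
noncomputable def yOp (r s : Fin n → K) (i : Fin n) :
    ((Fin n → ℕ) →₀ K) →ₗ[K] ((Fin n → ℕ) →₀ K) :=
  mkOp fun k => qint (r i) (s i) (k i) • Finsupp.single (Function.update k i (k i - 1)) (1 : K)

end ops

lemma Finsupp.linearMap_ext_single_one {R ι M : Type*} [Semiring R] [AddCommMonoid M]
    [Module R M] {f g : (ι →₀ R) →ₗ[R] M}
    (h : ∀ k, f (Finsupp.single k 1) = g (Finsupp.single k 1)) : f = g :=
  Finsupp.basisSingleOne.ext fun k => by simpa using h k

section BasisAction

variable {K : Type*} [Field K] {n : ℕ}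

lemma mkOp_single {ι : Type*} (f : ι → (ι →₀ K)) (k : ι) (c : K) :
    mkOp f (Finsupp.single k c) = c • f k := by
  simp [mkOp]

@[simp]
lemma rhoOp_single (a : Fin n → K) (i : Fin n) (k : Fin n → ℕ) (c : K) :
    rhoOp a i (Finsupp.single k c) = Finsupp.single k (c * a i ^ k i) := by
  simp [rhoOp, mkOp_single]

@[simp]
lemma rhoInvOp_single (a : Fin n → K) (i : Fin n) (k : Fin n → ℕ) (c : K) :
    rhoInvOp a i (Finsupp.single k c) = Finsupp.single k (c * (a i)⁻¹ ^ k i) := by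
  simp [rhoInvOp, mkOp_single]

@[simp]
lemma xOp_single (i : Fin n) (k : Fin n → ℕ) (c : K) :
    xOp i (Finsupp.single k c) = Finsupp.single (Function.update k i (k i + 1)) c := by
  simp [xOp, mkOp_single]

@[simp]
lemma yOp_single (r s : Fin n → K) (i : Fin n) (k : Fin n → ℕ) (c : K) :
    yOp r s i (Finsupp.single k c)
      = Finsupp.single (Function.update k i (k i - 1)) (c * qint (r i) (s i) (k i)) := by
  simp [yOp, mkOp_single]

end BasisAction

section QuantumInteger

variable {K : Type*} [Field K]

@[simp]
lemma qint_zero (r s : K) : qint r s 0 = 0 := by simp [qint]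

lemma qint_comm (r s : K) (m : ℕ) : qint r s m = qint s r m := by
  rw [qint, qint, ← neg_sub (s ^ 2), ← neg_sub (s ^ (2 * m)), neg_div_neg_eq]

lemma qint_succ_sub_mul (r s : K) (h : r ^ 2 ≠ s ^ 2) (m : ℕ) :
    qint r s (m + 1) - r ^ 2 * qint r s m = s ^ (2 * m) := by
  have h' : r ^ 2 - s ^ 2 ≠ 0 := sub_ne_zero.mpr h
  simp only [qint]
  field_simp
  ring

end QuantumInteger

section Relations

variable {K : Type*} [Field K] {n : ℕ}

open Finsupp (linearMap_ext_single_one)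

lemma rhoOp_comp_comm (a b : Fin n → K) (i j : Fin n) :
    rhoOp a i ∘ₗ rhoOp b j = rhoOp b j ∘ₗ rhoOp a i :=
  linearMap_ext_single_one fun k => by simp [mul_comm]

lemma rhoOp_comp_rhoInvOp {a : Fin n → K} {i : Fin n} (ha : a i ≠ 0) :
    rhoOp a i ∘ₗ rhoInvOp a i = LinearMap.id :=
  linearMap_ext_single_one fun k => by simp [ha]

lemma rhoInvOp_comp_rhoOp {a : Fin n → K} {i : Fin n} (ha : a i ≠ 0) :
    rhoInvOp a i ∘ₗ rhoOp a i = LinearMap.id :=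
  linearMap_ext_single_one fun k => by simp [ha]

lemma rhoOp_comp_xOp (a : Fin n → K) (i j : Fin n) :
    rhoOp a i ∘ₗ xOp j = (if i = j then a i else 1) • (xOp j ∘ₗ rhoOp a i) := by
  refine linearMap_ext_single_one fun k => ?_
  rcases eq_or_ne i j with rfl | hij
  · simp [pow_succ']
  · simp [hij]

lemma yOp_comp_rhoOp_self (r s a : Fin n → K) (i : Fin n) :
    yOp r s i ∘ₗ rhoOp a i = a i • (rhoOp a i ∘ₗ yOp r s i) := by
  refine linearMap_ext_single_one fun k => ?_
  rcases Nat.eq_zero_or_pos (k i) with hk | hk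
  · simp [hk]
  · simp only [LinearMap.comp_apply, LinearMap.smul_apply, rhoOp_single, yOp_single,
      Function.update_self, Finsupp.smul_single, smul_eq_mul, one_mul]
    rw [← pow_sub_one_mul hk.ne']
    ring_nf

lemma rhoOp_comp_yOp {a : Fin n → K} {i : Fin n} (ha : a i ≠ 0) (r s : Fin n → K) (j : Fin n) :
    rhoOp a i ∘ₗ yOp r s j = (if i = j then a i else 1)⁻¹ • (yOp r s j ∘ₗ rhoOp a i) := by
  rcases eq_or_ne i j with rfl | hij
  · rw [if_pos rfl, yOp_comp_rhoOp_self, inv_smul_smul₀ ha]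
  · refine linearMap_ext_single_one fun k => ?_
    simp [hij, mul_comm]

lemma xOp_comp_comm (i j : Fin n) : xOp (K := K) i ∘ₗ xOp j = xOp j ∘ₗ xOp i := by
  refine linearMap_ext_single_one fun k => ?_
  rcases eq_or_ne i j with rfl | hij
  · rfl
  · simp [Function.update_of_ne hij, Function.update_of_ne hij.symm, Function.update_comm hij]

lemma yOp_comp_comm (r s : Fin n → K) (i j : Fin n) :
    yOp r s i ∘ₗ yOp r s j = yOp r s j ∘ₗ yOp r s i := by
  refine linearMap_ext_single_one fun k => ?_
  rcases eq_or_ne i j with rfl | hij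
  · rfl
  · simp [Function.update_of_ne hij, Function.update_of_ne hij.symm,
      Function.update_comm hij, mul_comm]

lemma yOp_comp_xOp_of_ne (r s : Fin n → K) {i j : Fin n} (hij : i ≠ j) :
    yOp r s i ∘ₗ xOp j = xOp j ∘ₗ yOp r s i :=
  linearMap_ext_single_one fun k => by
    simp [Function.update_of_ne hij, Function.update_of_ne hij.symm, Function.update_comm hij]

lemma yOp_comp_xOp_single_one (r s : Fin n → K) (i : Fin n) (k : Fin n → ℕ) :
    (yOp r s i ∘ₗ xOp i) (Finsupp.single k 1) = Finsupp.single k (qint (r i) (s i) (k i + 1)) := by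
  simp

lemma xOp_comp_yOp_single_one (r s : Fin n → K) (i : Fin n) (k : Fin n → ℕ) :
    (xOp i ∘ₗ yOp r s i) (Finsupp.single k 1) = Finsupp.single k (qint (r i) (s i) (k i)) := by
  rcases Nat.eq_zero_or_pos (k i) with hk | hk
  · simp [hk]
  · simp [Nat.sub_add_cancel hk]

lemma yOp_comp_xOp_sub_smul {r s : Fin n → K} {i : Fin n} (h : r i ^ 2 ≠ s i ^ 2) :
    yOp r s i ∘ₗ xOp i - r i ^ 2 • (xOp i ∘ₗ yOp r s i) = rhoOp s i ∘ₗ rhoOp s i := by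
  refine linearMap_ext_single_one fun k => ?_
  rw [LinearMap.sub_apply, LinearMap.smul_apply, yOp_comp_xOp_single_one,
    xOp_comp_yOp_single_one, Finsupp.smul_single, ← Finsupp.single_sub, smul_eq_mul,
    qint_succ_sub_mul _ _ h]
  simp [← pow_add, two_mul]

lemma yOp_swap (r s : Fin n → K) : yOp s r = yOp (K := K) r s := by
  funext i
  simp only [yOp, qint_comm (s i)]

end Relations

theorem stmt5_general {K : Type*} [Field K] (n : ℕ)
    (r s : Fin n → K) (hr : ∀ i, r i ≠ 0) (hs : ∀ i, s i ≠ 0)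
    (hrs : ∀ i, (r i) ^ 2 ≠ (s i) ^ 2) :
    -- (R1) the ρ_i^{±1}, σ_j^{±1} commute and are mutually inverse
    (∀ i j : Fin n,
        rhoOp r i ∘ₗ rhoOp r j = rhoOp r j ∘ₗ rhoOp r i ∧
        rhoOp (K := K) r i ∘ₗ rhoOp s j = rhoOp s j ∘ₗ rhoOp r i ∧
        rhoOp (K := K) s i ∘ₗ rhoOp s j = rhoOp s j ∘ₗ rhoOp s i) ∧
    (∀ i : Fin n,
        rhoOp (K := K) r i ∘ₗ rhoInvOp r i = LinearMap.id ∧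
        rhoInvOp (K := K) r i ∘ₗ rhoOp r i = LinearMap.id ∧
        rhoOp (K := K) s i ∘ₗ rhoInvOp s i = LinearMap.id ∧
        rhoInvOp (K := K) s i ∘ₗ rhoOp s i = LinearMap.id) ∧
    -- (R2) ρ_i x_j = r_i^{δij} x_j ρ_i, ρ_i y_j = r_i^{-δij} y_j ρ_i
    (∀ i j : Fin n,
        rhoOp r i ∘ₗ xOp j = (if i = j then r i else 1) • (xOp j ∘ₗ rhoOp r i) ∧
        rhoOp r i ∘ₗ yOp r s j = (if i = j then r i else 1)⁻¹ • (yOp r s j ∘ₗ rhoOp r i)) ∧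
    -- (R3) σ_i x_j = s_i^{δij} x_j σ_i, σ_i y_j = s_i^{-δij} y_j σ_i
    (∀ i j : Fin n,
        rhoOp s i ∘ₗ xOp j = (if i = j then s i else 1) • (xOp j ∘ₗ rhoOp s i) ∧
        rhoOp s i ∘ₗ yOp r s j = (if i = j then s i else 1)⁻¹ • (yOp r s j ∘ₗ rhoOp s i)) ∧
    -- (R4)
    (∀ i j : Fin n,
        xOp (K := K) (n := n) i ∘ₗ xOp j = xOp j ∘ₗ xOp i ∧
        yOp r s i ∘ₗ yOp r s j = yOp r s j ∘ₗ yOp r s i) ∧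
    (∀ i j : Fin n, i ≠ j → yOp r s i ∘ₗ xOp j = xOp j ∘ₗ yOp r s i) ∧
    -- (R5)
    (∀ i : Fin n,
        yOp r s i ∘ₗ xOp i - (r i) ^ 2 • (xOp i ∘ₗ yOp r s i) = rhoOp s i ∘ₗ rhoOp s i ∧
        yOp r s i ∘ₗ xOp i - (s i) ^ 2 • (xOp i ∘ₗ yOp r s i) = rhoOp r i ∘ₗ rhoOp r i) :=
  ⟨fun i j => ⟨rhoOp_comp_comm r r i j, rhoOp_comp_comm r s i j, rhoOp_comp_comm s s i j⟩,
    fun i => ⟨rhoOp_comp_rhoInvOp (hr i), rhoInvOp_comp_rhoOp (hr i),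
      rhoOp_comp_rhoInvOp (hs i), rhoInvOp_comp_rhoOp (hs i)⟩,
    fun i j => ⟨rhoOp_comp_xOp r i j, rhoOp_comp_yOp (hr i) r s j⟩,
    fun i j => ⟨rhoOp_comp_xOp s i j, rhoOp_comp_yOp (hs i) r s j⟩,
    fun i j => ⟨xOp_comp_comm i j, yOp_comp_comm r s i j⟩,
    fun _ _ hij => yOp_comp_xOp_of_ne r s hij,
    fun i => ⟨yOp_comp_xOp_sub_smul (hrs i), by
      simpa only [yOp_swap] using yOp_comp_xOp_sub_smul (r := s) (s := r) (hrs i).symm⟩⟩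

/-- the natural operators on the polynomial space `P(n)` satisfy the
defining relations (R1)-(R5) of the multiparameter Weyl algebra `A_{r,s}(n)`. -/
theorem stmt5 {K : Type*} [Field K] (n : ℕ) (hn : 1 ≤ n)
    (r s : Fin n → K) (hr : ∀ i, r i ≠ 0) (hs : ∀ i, s i ≠ 0)
    (hrs : ∀ i, (r i) ^ 2 ≠ (s i) ^ 2) :
    -- (R1) the ρ_i^{±1}, σ_j^{±1} commute and are mutually inverse
    (∀ i j : Fin n,
        rhoOp r i ∘ₗ rhoOp r j = rhoOp r j ∘ₗ rhoOp r i ∧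
        rhoOp (K := K) r i ∘ₗ rhoOp s j = rhoOp s j ∘ₗ rhoOp r i ∧
        rhoOp (K := K) s i ∘ₗ rhoOp s j = rhoOp s j ∘ₗ rhoOp s i) ∧
    (∀ i : Fin n,
        rhoOp (K := K) r i ∘ₗ rhoInvOp r i = LinearMap.id ∧
        rhoInvOp (K := K) r i ∘ₗ rhoOp r i = LinearMap.id ∧
        rhoOp (K := K) s i ∘ₗ rhoInvOp s i = LinearMap.id ∧
        rhoInvOp (K := K) s i ∘ₗ rhoOp s i = LinearMap.id) ∧
    -- (R2) ρ_i x_j = r_i^{δij} x_j ρ_i, ρ_i y_j = r_i^{-δij} y_j ρ_i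
    (∀ i j : Fin n,
        rhoOp r i ∘ₗ xOp j = (if i = j then r i else 1) • (xOp j ∘ₗ rhoOp r i) ∧
        rhoOp r i ∘ₗ yOp r s j = (if i = j then r i else 1)⁻¹ • (yOp r s j ∘ₗ rhoOp r i)) ∧
    -- (R3) σ_i x_j = s_i^{δij} x_j σ_i, σ_i y_j = s_i^{-δij} y_j σ_i
    (∀ i j : Fin n,
        rhoOp s i ∘ₗ xOp j = (if i = j then s i else 1) • (xOp j ∘ₗ rhoOp s i) ∧
        rhoOp s i ∘ₗ yOp r s j = (if i = j then s i else 1)⁻¹ • (yOp r s j ∘ₗ rhoOp s i)) ∧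
    -- (R4)
    (∀ i j : Fin n,
        xOp (K := K) (n := n) i ∘ₗ xOp j = xOp j ∘ₗ xOp i ∧
        yOp r s i ∘ₗ yOp r s j = yOp r s j ∘ₗ yOp r s i) ∧
    (∀ i j : Fin n, i ≠ j → yOp r s i ∘ₗ xOp j = xOp j ∘ₗ yOp r s i) ∧
    -- (R5)
    (∀ i : Fin n,
        yOp r s i ∘ₗ xOp i - (r i) ^ 2 • (xOp i ∘ₗ yOp r s i) = rhoOp s i ∘ₗ rhoOp s i ∧
        yOp r s i ∘ₗ xOp i - (s i) ^ 2 • (xOp i ∘ₗ yOp r s i) = rhoOp r i ∘ₗ rhoOp r i) :=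
  stmt5_general n r s hr hs hrs
end

section
/- Let K be a field, n ≥ 2, and r_i, s_i ∈ K× with r_i^2 ≠ s_i^2. In the multiparameter Weyl algebra A_{r,s}(n) with generators ρ_i^{±1}, σ_i^{±1}, x_i, y_i satisfying (R1)–(R5), the elements e_i := y_{i+1} x_i and f_i := y_i x_{i+1} (1 ≤ i < n) satisfy the quantum Serre-type relation [e_i, [e_i, e_{i+1}]_{r_{i+1}^2}]_{s_{i+1}^2} = 0, where [a,b]_q = ab − q·ba. -/
/-!
Write `[a, b]_q = a * b - q • (b * a)`. Relation (R5) says `[y, x]_{r²} = σ²`, and (R3) makes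
`y` and `σ²` `s²`-commute, so `[y, [y, x]_{r²}]_{s²} = 0`: this is the down-up relation at index
`i + 1`. Since `x_i` and `y_{i+2}` commute with `y_{i+1}`, `x_{i+1}` and with each other, they can
be pulled out of the iterated commutator of `e_i = y_{i+1} x_i` and `e_{i+1} = y_{i+2} x_{i+1}`,
which becomes `[y, [y, x]_{r²}]_{s²} * (x_i x_i y_{i+2}) = 0`.
-/

section QCommutator

variable {R A : Type*} [CommSemiring R] [Ring A] [Algebra R A]

def qCommutator (q : R) (a b : A) : A := a * b - q • (b * a)

theorem qCommutator_eq_zero_iff {q : R} {a b : A} :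
    qCommutator q a b = 0 ↔ a * b = q • (b * a) :=
  sub_eq_zero

theorem qCommutator_mul_right_eq_zero {p q : R} {a b c : A} (hb : qCommutator p a b = 0)
    (hc : qCommutator q a c = 0) : qCommutator (p * q) a (b * c) = 0 := by
  rw [qCommutator_eq_zero_iff] at *
  rw [← mul_assoc, hb, smul_mul_assoc, mul_assoc, hc, mul_smul_comm, smul_smul, mul_assoc]

theorem qCommutator_mul_mul_of_commute (q : R) {a b m m' : A} (hmb : Commute m b)
    (hm'a : Commute m' a) (hmm' : Commute m m') :
    qCommutator q (a * m) (b * m') = qCommutator q a b * (m * m') := by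
  have hleft : a * m * (b * m') = a * b * (m * m') := by
    rw [mul_assoc, ← mul_assoc m, hmb.eq]; simp only [mul_assoc]
  have hright : b * m' * (a * m) = b * a * (m * m') := by
    rw [mul_assoc, ← mul_assoc m', hm'a.eq, hmm'.eq]; simp only [mul_assoc]
  rw [qCommutator, qCommutator, hleft, hright, sub_mul, smul_mul_assoc]

theorem qCommutator_qCommutator_mul_mul_eq_zero {p q : R} {u w X v : A}
    (huw : qCommutator q u (qCommutator p u w) = 0) (hXu : Commute X u) (hXw : Commute X w)
    (hXv : Commute X v) (hvu : Commute v u) (hvw : Commute v w) :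
    qCommutator q (u * X) (qCommutator p (u * X) (v * w)) = 0 := by
  have hXc : Commute X (qCommutator p u w) :=
    (hXu.mul_right hXw).sub_right ((hXw.mul_right hXu).smul_right p)
  rw [hvw.eq, qCommutator_mul_mul_of_commute p hXw hvu hXv,
    qCommutator_mul_mul_of_commute q hXc (hXu.mul_left hvu) ((Commute.refl X).mul_right hXv),
    huw, zero_mul]

end QCommutator

theorem qCommutator_eq_zero_of_mul_eq_inv_smul {K A : Type*} [Field K] [Ring A] [Algebra K A]
    {s : K} {y z : A} (hs : s ≠ 0) (h : z * y = s⁻¹ • (y * z)) : qCommutator s y z = 0 := by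
  rw [qCommutator, h, smul_smul, mul_inv_cancel₀ hs, one_smul, sub_self]

/-- in `A_{r,s}(n)` (here: any algebra with elements satisfying the
defining relations (R1)-(R5)), the elements `e_i = y_{i+1} x_i` satisfy the quantum
Serre-type relation `[e_i, [e_i, e_{i+1}]_{r_{i+1}²}]_{s_{i+1}²} = 0`,
where `[a,b]_q = ab - q·ba`.  (Indices are 0-based: the paper's `e_i`, `1 ≤ i < n`,
is `e ⟨i-1⟩` here.) -/
theorem stmt12 {K : Type*} [Field K] {A : Type*} [Ring A] [Algebra K A]
    (n : ℕ) (r s : Fin n → K)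
    (hs : ∀ i, s i ≠ 0)
    (σ x y : Fin n → A)
    -- (R3)
    (hσy : ∀ i j, σ i * y j = (if i = j then s i else 1)⁻¹ • (y j * σ i))
    -- (R4)
    (hxx : ∀ i j, x i * x j = x j * x i) (hyy : ∀ i j, y i * y j = y j * y i)
    (hyx : ∀ i j, i ≠ j → y i * x j = x j * y i)
    -- (R5)
    (hR5r : ∀ i, y i * x i - (r i) ^ 2 • (x i * y i) = σ i * σ i)
    (i : ℕ) (hi2 : i + 2 < n) :
    (y ⟨i + 1, by omega⟩ * x ⟨i, by omega⟩) *
        ((y ⟨i + 1, by omega⟩ * x ⟨i, by omega⟩) * (y ⟨i + 2, by omega⟩ * x ⟨i + 1, by omega⟩)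
          - (r ⟨i + 1, by omega⟩) ^ 2 •
            ((y ⟨i + 2, by omega⟩ * x ⟨i + 1, by omega⟩) * (y ⟨i + 1, by omega⟩ * x ⟨i, by omega⟩)))
      - (s ⟨i + 1, by omega⟩) ^ 2 •
        (((y ⟨i + 1, by omega⟩ * x ⟨i, by omega⟩) * (y ⟨i + 2, by omega⟩ * x ⟨i + 1, by omega⟩)
          - (r ⟨i + 1, by omega⟩) ^ 2 •
            ((y ⟨i + 2, by omega⟩ * x ⟨i + 1, by omega⟩) * (y ⟨i + 1, by omega⟩ * x ⟨i, by omega⟩)))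
          * (y ⟨i + 1, by omega⟩ * x ⟨i, by omega⟩)) = 0 := by
  set a : Fin n := ⟨i, by omega⟩
  set b : Fin n := ⟨i + 1, by omega⟩
  set c : Fin n := ⟨i + 2, by omega⟩
  have hba : b ≠ a := by simp [a, b, Fin.ext_iff]
  have hca : c ≠ a := by simp [a, c, Fin.ext_iff]
  have hcb : c ≠ b := by simp [b, c, Fin.ext_iff]
  have hyσ : qCommutator (s b) (y b) (σ b) = 0 :=
    qCommutator_eq_zero_of_mul_eq_inv_smul (hs b) (by simpa using hσy b b)
  have hdownUp : qCommutator (s b ^ 2) (y b) (qCommutator (r b ^ 2) (y b) (x b)) = 0 := by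
    rw [show qCommutator (r b ^ 2) (y b) (x b) = σ b * σ b from hR5r b, sq]
    exact qCommutator_mul_right_eq_zero hyσ hyσ
  exact qCommutator_qCommutator_mul_mul_eq_zero hdownUp (hyx b a hba).symm (hxx a b)
    (hyx c a hca).symm (hyy c b) (hyx c b hcb)
end

section
/- Let K be a field, r, s ∈ K× with r^2 ≠ s^2 and satisfying: r^p = s^q (p,q ∈ ℤ) implies p = q = 0. In the algebra A_{r,s}(1), conjugation by ρ sends x ↦ r x, y ↦ r^{-1} y, fixes ρ and σ, and conjugation by σ sends x ↦ s x, y ↦ s^{-1} y, fixes ρ and σ; moreover the automorphism given by conjugation by ρ^p σ^{-q} is the identity on A_{r,s}(1) if and only if r^p = s^q, i.e., if and only if (p,q) = (0,0). -/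
/-- Generators of the multiparameter Weyl algebra `A_{r,s}(1)`:
`ρ, ρ⁻¹, σ, σ⁻¹, x, y`. -/
inductive ArsGen : Type
  | R | Rinv | S | Sinv | X | Y

open FreeAlgebra in
/-- Defining relations (R1)-(R5) of `A_{r,s}(1)`. -/
inductive ArsRel (K : Type*) [Field K] (r s : K) :
    FreeAlgebra K ArsGen → FreeAlgebra K ArsGen → Prop
  | comm : ArsRel K r s (ι K ArsGen.R * ι K ArsGen.S) (ι K ArsGen.S * ι K ArsGen.R)
  | rinv1 : ArsRel K r s (ι K ArsGen.R * ι K ArsGen.Rinv) 1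
  | rinv2 : ArsRel K r s (ι K ArsGen.Rinv * ι K ArsGen.R) 1
  | sinv1 : ArsRel K r s (ι K ArsGen.S * ι K ArsGen.Sinv) 1
  | sinv2 : ArsRel K r s (ι K ArsGen.Sinv * ι K ArsGen.S) 1
  | commRinv : ArsRel K r s (ι K ArsGen.Rinv * ι K ArsGen.S) (ι K ArsGen.S * ι K ArsGen.Rinv)
  | commSinv : ArsRel K r s (ι K ArsGen.R * ι K ArsGen.Sinv) (ι K ArsGen.Sinv * ι K ArsGen.R)
  | commInvInv :
      ArsRel K r s (ι K ArsGen.Rinv * ι K ArsGen.Sinv) (ι K ArsGen.Sinv * ι K ArsGen.Rinv)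
  | rx : ArsRel K r s (ι K ArsGen.R * ι K ArsGen.X) (r • (ι K ArsGen.X * ι K ArsGen.R))
  | ry : ArsRel K r s (ι K ArsGen.R * ι K ArsGen.Y) (r⁻¹ • (ι K ArsGen.Y * ι K ArsGen.R))
  | sx : ArsRel K r s (ι K ArsGen.S * ι K ArsGen.X) (s • (ι K ArsGen.X * ι K ArsGen.S))
  | sy : ArsRel K r s (ι K ArsGen.S * ι K ArsGen.Y) (s⁻¹ • (ι K ArsGen.Y * ι K ArsGen.S))
  | r5a : ArsRel K r s (ι K ArsGen.Y * ι K ArsGen.X - r ^ 2 • (ι K ArsGen.X * ι K ArsGen.Y))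
      (ι K ArsGen.S * ι K ArsGen.S)
  | r5b : ArsRel K r s (ι K ArsGen.Y * ι K ArsGen.X - s ^ 2 • (ι K ArsGen.X * ι K ArsGen.Y))
      (ι K ArsGen.R * ι K ArsGen.R)

/-- The multiparameter Weyl algebra `A_{r,s}(1)`, presented by generators and relations. -/
abbrev Ars1 (K : Type*) [Field K] (r s : K) : Type _ := RingQuot (ArsRel K r s)

section elts
variable (K : Type*) [Field K] (r s : K)

noncomputable def arsρ : Ars1 K r s := RingQuot.mkAlgHom K (ArsRel K r s) (FreeAlgebra.ι K ArsGen.R)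
noncomputable def arsρinv : Ars1 K r s := RingQuot.mkAlgHom K (ArsRel K r s) (FreeAlgebra.ι K ArsGen.Rinv)
noncomputable def arsσ : Ars1 K r s := RingQuot.mkAlgHom K (ArsRel K r s) (FreeAlgebra.ι K ArsGen.S)
noncomputable def arsσinv : Ars1 K r s := RingQuot.mkAlgHom K (ArsRel K r s) (FreeAlgebra.ι K ArsGen.Sinv)
noncomputable def arsx : Ars1 K r s := RingQuot.mkAlgHom K (ArsRel K r s) (FreeAlgebra.ι K ArsGen.X)
noncomputable def arsy : Ars1 K r s := RingQuot.mkAlgHom K (ArsRel K r s) (FreeAlgebra.ι K ArsGen.Y)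

/-- `u^k` for `k : ℤ`, where `uinv` is a two-sided inverse of `u`. -/
noncomputable def zpowOf {A : Type*} [Ring A] (u uinv : A) (k : ℤ) : A :=
  if 0 ≤ k then u ^ k.toNat else uinv ^ (-k).toNat

end elts

/-!
Conjugation by `c = ρ^p σ^q` scales `x` by `λ = r^p s^q`, scales `y` by `λ⁻¹` and fixes `ρ^{±1}`,
`σ^{±1}`. If `λ = 1`, then `c` commutes with every generator and is therefore central. Conversely,
if `c` is central, then `(λ - 1) • x c = 0`, and `x c ≠ 0` because in the polynomial
representation on `K[X]` (`x` is multiplication by `X`, `ρ`, `σ` rescale `X`, and `y` is an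
`(r, s)`-difference operator) `x c` sends `1` to `X`.
-/

section ScaledCommutation
variable {K A : Type*} [Field K] [Ring A] [Algebra K A] {u v a : A} {t : K}

theorem mul_mul_eq_smul_of_mul_eq_smul_mul (huv : u * v = 1) (h : u * a = t • (a * u)) :
    u * a * v = t • a := by
  rw [h, smul_mul_assoc, mul_assoc, huv, mul_one]

theorem mul_eq_inv_smul_mul_of_mul_eq_smul_mul (huv : u * v = 1) (hvu : v * u = 1) (ht : t ≠ 0)
    (h : u * a = t • (a * u)) : v * a = t⁻¹ • (a * v) := by
  have : a * v = t • (v * a) := by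
    calc a * v = v * (u * a) * v := by rw [← mul_assoc, hvu, one_mul]
      _ = t • (v * a) := by
        rw [h, mul_smul_comm, smul_mul_assoc, mul_assoc, mul_assoc, huv, mul_one]
  rw [this, smul_smul, inv_mul_cancel₀ ht, one_smul]

theorem pow_mul_eq_smul_mul (h : u * a = t • (a * u)) (n : ℕ) :
    u ^ n * a = t ^ n • (a * u ^ n) := by
  induction n with
  | zero => simp
  | succ k ih =>
    calc u ^ (k + 1) * a = u ^ k * (u * a) := by rw [pow_succ, mul_assoc]
      _ = t • (t ^ k • (a * u ^ k) * u) := by rw [h, mul_smul_comm, ← mul_assoc, ih]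
      _ = t ^ (k + 1) • (a * u ^ (k + 1)) := by
        rw [smul_mul_assoc, smul_smul, mul_assoc, ← pow_succ, ← pow_succ']

theorem zpowOf_mul_eq_smul_mul (h : u * a = t • (a * u)) (h' : v * a = t⁻¹ • (a * v)) (k : ℤ) :
    zpowOf u v k * a = t ^ k • (a * zpowOf u v k) := by
  unfold zpowOf
  split_ifs with hk
  · rw [pow_mul_eq_smul_mul h, ← zpow_natCast, Int.toNat_of_nonneg hk]
  · rw [pow_mul_eq_smul_mul h', ← zpow_natCast, Int.toNat_of_nonneg (by omega), inv_zpow',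
      neg_neg]

end ScaledCommutation

theorem Commute.zpowOf_left {A : Type*} [Ring A] {u v a : A} (hu : Commute u a)
    (hv : Commute v a) (k : ℤ) : Commute (zpowOf u v k) a := by
  unfold zpowOf
  split_ifs
  · exact hu.pow_left _
  · exact hv.pow_left _

theorem map_zpowOf {A B F : Type*} [Ring A] [Ring B] [FunLike F A B] [MonoidHomClass F A B]
    (f : F) (u v : A) (k : ℤ) : f (zpowOf u v k) = zpowOf (f u) (f v) k := by
  unfold zpowOf
  split_ifs <;> exact map_pow f _ _

theorem RingQuot.commute_of_forall_commute_mkAlgHom_ι {R X : Type*} [CommSemiring R]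
    {rel : FreeAlgebra R X → FreeAlgebra R X → Prop} {c : RingQuot rel}
    (h : ∀ g, Commute c (mkAlgHom R rel (FreeAlgebra.ι R g))) (a : RingQuot rel) :
    Commute c a := by
  obtain ⟨b, rfl⟩ := mkAlgHom_surjective R rel a
  induction b using FreeAlgebra.induction with
  | grade0 k => rw [AlgHom.commutes]; exact (Algebra.commutes' k c).symm
  | grade1 g => exact h g
  | mul b₁ b₂ h₁ h₂ => rw [map_mul]; exact h₁.mul_right h₂
  | add b₁ b₂ h₁ h₂ => rw [map_add]; exact h₁.add_right h₂

section PolynomialRepresentation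
variable {K : Type*} [Field K]

theorem Finsupp.linearMap_ext_single_one_s15 {α M : Type*} [AddCommGroup M] [Module K M]
    {f g : (α →₀ K) →ₗ[K] M} (h : ∀ n, f (single n 1) = g (single n 1)) : f = g :=
  Finsupp.basisSingleOne.ext fun n => by simpa only [Finsupp.coe_basisSingleOne] using h n

noncomputable def rsNumber (r s : K) (n : ℕ) : K := (s ^ (2 * n) - r ^ (2 * n)) / (s ^ 2 - r ^ 2)

theorem rsNumber_zero (r s : K) : rsNumber r s 0 = 0 := by simp [rsNumber]

theorem rsNumber_comm (r s : K) (n : ℕ) : rsNumber r s n = rsNumber s r n := by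
  rw [rsNumber, rsNumber, ← neg_div_neg_eq, neg_sub, neg_sub]

theorem rsNumber_succ_sub {r s : K} (hrs : r ^ 2 ≠ s ^ 2) (n : ℕ) :
    rsNumber r s (n + 1) - r ^ 2 * rsNumber r s n = s ^ (2 * n) := by
  have : s ^ 2 - r ^ 2 ≠ 0 := sub_ne_zero.mpr hrs.symm
  unfold rsNumber
  field_simp
  ring

/-- `f(X) ↦ f(t X)`. -/
noncomputable def weightOp : K →* Module.End K (ℕ →₀ K) where
  toFun t := Finsupp.linearCombination K fun n => t ^ n • Finsupp.single n 1
  map_one' := Finsupp.linearMap_ext_single_one_s15 fun n => by simp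
  map_mul' t u := Finsupp.linearMap_ext_single_one_s15 fun n => by
    simp [mul_pow, mul_comm]

noncomputable def raiseOp : Module.End K (ℕ →₀ K) :=
  Finsupp.linearCombination K fun n => Finsupp.single (n + 1) 1

/-- `Xⁿ ↦ [n]_{r,s} Xⁿ⁻¹`, i.e. `f ↦ (f(s²X) - f(r²X)) / ((s² - r²) X)`. -/
noncomputable def lowerOp (r s : K) : Module.End K (ℕ →₀ K) :=
  Finsupp.linearCombination K fun n => rsNumber r s n • Finsupp.single (n - 1) 1

theorem weightOp_single (t : K) (n : ℕ) :
    weightOp t (Finsupp.single n 1) = t ^ n • Finsupp.single n 1 := by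
  simp [weightOp]

theorem raiseOp_single (n : ℕ) :
    raiseOp (Finsupp.single n (1 : K)) = Finsupp.single (n + 1) 1 := by
  simp [raiseOp]

theorem lowerOp_single (r s : K) (n : ℕ) :
    lowerOp r s (Finsupp.single n 1) = rsNumber r s n • Finsupp.single (n - 1) 1 := by
  simp [lowerOp]

theorem lowerOp_comm (r s : K) : lowerOp r s = lowerOp s r := by
  simp only [lowerOp, rsNumber_comm r s]

theorem weightOp_mul_raiseOp (t : K) : weightOp t * raiseOp = t • (raiseOp * weightOp t) := by
  refine Finsupp.linearMap_ext_single_one_s15 fun n => ?_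
  simp only [Module.End.mul_apply, LinearMap.smul_apply, raiseOp_single, weightOp_single,
    map_smul, smul_smul, pow_succ']

theorem weightOp_mul_lowerOp {t : K} (ht : t ≠ 0) (r s : K) :
    weightOp t * lowerOp r s = t⁻¹ • (lowerOp r s * weightOp t) := by
  refine Finsupp.linearMap_ext_single_one_s15 fun n => ?_
  simp only [Module.End.mul_apply, LinearMap.smul_apply, lowerOp_single, weightOp_single,
    map_smul, smul_smul]
  rcases n with _ | n
  · simp [rsNumber_zero]
  · rw [Nat.add_sub_cancel]
    congr 1
    field_simp
    ring

theorem lowerOp_mul_raiseOp_sub {r s : K} (hrs : r ^ 2 ≠ s ^ 2) :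
    lowerOp r s * raiseOp - r ^ 2 • (raiseOp * lowerOp r s) = weightOp s * weightOp s := by
  refine Finsupp.linearMap_ext_single_one_s15 fun n => ?_
  have hraise_lower : raiseOp (lowerOp r s (Finsupp.single n 1)) =
      rsNumber r s n • Finsupp.single n 1 := by
    rcases n with _ | n
    · simp [lowerOp_single, rsNumber_zero]
    · rw [lowerOp_single, map_smul, raiseOp_single, Nat.add_sub_cancel]
  rw [LinearMap.sub_apply, LinearMap.smul_apply, Module.End.mul_apply, Module.End.mul_apply,
    raiseOp_single, lowerOp_single, Nat.add_sub_cancel, hraise_lower, smul_smul, ← sub_smul,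
    rsNumber_succ_sub hrs, ← map_mul, weightOp_single, ← sq, ← pow_mul]

end PolynomialRepresentation

section Representation
variable {K : Type*} [Field K] {r s : K}

noncomputable def arsGenOp (r s : K) : ArsGen → Module.End K (ℕ →₀ K)
  | .R => weightOp r
  | .Rinv => weightOp r⁻¹
  | .S => weightOp s
  | .Sinv => weightOp s⁻¹
  | .X => raiseOp
  | .Y => lowerOp r s

theorem arsGenOp_respects_rel (hr : r ≠ 0) (hs : s ≠ 0) (hrs : r ^ 2 ≠ s ^ 2)
    ⦃a b : FreeAlgebra K ArsGen⦄ (h : ArsRel K r s a b) :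
    FreeAlgebra.lift K (arsGenOp r s) a = FreeAlgebra.lift K (arsGenOp r s) b := by
  induction h <;>
    simp only [map_mul, map_sub, map_smul, map_one, FreeAlgebra.lift_ι_apply, arsGenOp]
  case comm | commRinv | commSinv | commInvInv => rw [← map_mul, ← map_mul, mul_comm]
  case rinv1 => rw [← map_mul, mul_inv_cancel₀ hr, map_one]
  case rinv2 => rw [← map_mul, inv_mul_cancel₀ hr, map_one]
  case sinv1 => rw [← map_mul, mul_inv_cancel₀ hs, map_one]
  case sinv2 => rw [← map_mul, inv_mul_cancel₀ hs, map_one]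
  case rx | sx => exact weightOp_mul_raiseOp _
  case ry => exact weightOp_mul_lowerOp hr r s
  case sy => exact weightOp_mul_lowerOp hs r s
  case r5a => exact lowerOp_mul_raiseOp_sub hrs
  case r5b => rw [lowerOp_comm]; exact lowerOp_mul_raiseOp_sub hrs.symm

/-- The polynomial representation; `ℕ →₀ K` stands for `K[X]` with basis `Xⁿ`. -/
noncomputable def arsRep (hr : r ≠ 0) (hs : s ≠ 0) (hrs : r ^ 2 ≠ s ^ 2) :
    Ars1 K r s →ₐ[K] Module.End K (ℕ →₀ K) :=
  RingQuot.liftAlgHom K ⟨FreeAlgebra.lift K (arsGenOp r s), arsGenOp_respects_rel hr hs hrs⟩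

theorem arsRep_mkAlgHom_ι (hr : r ≠ 0) (hs : s ≠ 0) (hrs : r ^ 2 ≠ s ^ 2) (g : ArsGen) :
    arsRep hr hs hrs (RingQuot.mkAlgHom K (ArsRel K r s) (FreeAlgebra.ι K g)) = arsGenOp r s g := by
  rw [arsRep, RingQuot.liftAlgHom_mkAlgHom_apply, FreeAlgebra.lift_ι_apply]

theorem zpowOf_weightOp_single_zero (t t' : K) (k : ℤ) :
    zpowOf (weightOp t) (weightOp t') k (Finsupp.single 0 1) = Finsupp.single 0 1 := by
  unfold zpowOf
  split_ifs <;> rw [← map_pow, weightOp_single, pow_zero, one_smul]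

end Representation

/-- `ρ^p σ^q`. -/
noncomputable def arsMonomial (K : Type*) [Field K] (r s : K) (p q : ℤ) : Ars1 K r s :=
  zpowOf (arsρ K r s) (arsρinv K r s) p * zpowOf (arsσ K r s) (arsσinv K r s) q

section Ars
variable {K : Type*} [Field K] {r s : K}

local notation "ρ" => arsρ K r s
local notation "ρ⁻" => arsρinv K r s
local notation "σ" => arsσ K r s
local notation "σ⁻" => arsσinv K r s
local notation "x" => arsx K r s
local notation "y" => arsy K r s

theorem arsρ_mul_arsρinv : ρ * ρ⁻ = 1 := by
  rw [arsρ, arsρinv, ← map_mul, RingQuot.mkAlgHom_rel K ArsRel.rinv1, map_one]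

theorem arsρinv_mul_arsρ : ρ⁻ * ρ = 1 := by
  rw [arsρ, arsρinv, ← map_mul, RingQuot.mkAlgHom_rel K ArsRel.rinv2, map_one]

theorem arsσ_mul_arsσinv : σ * σ⁻ = 1 := by
  rw [arsσ, arsσinv, ← map_mul, RingQuot.mkAlgHom_rel K ArsRel.sinv1, map_one]

theorem arsσinv_mul_arsσ : σ⁻ * σ = 1 := by
  rw [arsσ, arsσinv, ← map_mul, RingQuot.mkAlgHom_rel K ArsRel.sinv2, map_one]

theorem commute_arsρ_arsσ : Commute ρ σ := by
  rw [Commute, SemiconjBy, arsρ, arsσ, ← map_mul, RingQuot.mkAlgHom_rel K ArsRel.comm, map_mul]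

theorem commute_arsρinv_arsσ : Commute ρ⁻ σ := by
  rw [Commute, SemiconjBy, arsρinv, arsσ, ← map_mul, RingQuot.mkAlgHom_rel K ArsRel.commRinv,
    map_mul]

theorem commute_arsρ_arsσinv : Commute ρ σ⁻ := by
  rw [Commute, SemiconjBy, arsρ, arsσinv, ← map_mul, RingQuot.mkAlgHom_rel K ArsRel.commSinv,
    map_mul]

theorem commute_arsρinv_arsσinv : Commute ρ⁻ σ⁻ := by
  rw [Commute, SemiconjBy, arsρinv, arsσinv, ← map_mul,
    RingQuot.mkAlgHom_rel K ArsRel.commInvInv, map_mul]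

theorem arsρ_mul_arsx : ρ * x = r • (x * ρ) := by
  rw [arsρ, arsx, ← map_mul, RingQuot.mkAlgHom_rel K ArsRel.rx, map_smul, map_mul]

theorem arsρ_mul_arsy : ρ * y = r⁻¹ • (y * ρ) := by
  rw [arsρ, arsy, ← map_mul, RingQuot.mkAlgHom_rel K ArsRel.ry, map_smul, map_mul]

theorem arsσ_mul_arsx : σ * x = s • (x * σ) := by
  rw [arsσ, arsx, ← map_mul, RingQuot.mkAlgHom_rel K ArsRel.sx, map_smul, map_mul]

theorem arsσ_mul_arsy : σ * y = s⁻¹ • (y * σ) := by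
  rw [arsσ, arsy, ← map_mul, RingQuot.mkAlgHom_rel K ArsRel.sy, map_smul, map_mul]

theorem arsx_mul_arsMonomial_ne_zero (hr : r ≠ 0) (hs : s ≠ 0) (hrs : r ^ 2 ≠ s ^ 2)
    (p q : ℤ) : x * arsMonomial K r s p q ≠ 0 := by
  intro h
  have h1 := congr($(congrArg (arsRep hr hs hrs) h) (Finsupp.single 0 1) 1)
  simp only [arsMonomial, map_mul, map_zpowOf, map_zero, arsx, arsρ, arsρinv, arsσ, arsσinv,
    arsRep_mkAlgHom_ι, arsGenOp, Module.End.mul_apply, zpowOf_weightOp_single_zero, raiseOp_single,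
    LinearMap.zero_apply, Finsupp.single_eq_same, Finsupp.coe_zero, Pi.zero_apply] at h1
  exact one_ne_zero h1

theorem arsMonomial_mul_arsx (hr : r ≠ 0) (hs : s ≠ 0) (p q : ℤ) :
    arsMonomial K r s p q * x = (r ^ p * s ^ q) • (x * arsMonomial K r s p q) := by
  have hρ : zpowOf ρ ρ⁻ p * x = r ^ p • (x * zpowOf ρ ρ⁻ p) :=
    zpowOf_mul_eq_smul_mul arsρ_mul_arsx (mul_eq_inv_smul_mul_of_mul_eq_smul_mul
    arsρ_mul_arsρinv arsρinv_mul_arsρ hr arsρ_mul_arsx) p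
  have hσ : zpowOf σ σ⁻ q * x = s ^ q • (x * zpowOf σ σ⁻ q) :=
    zpowOf_mul_eq_smul_mul arsσ_mul_arsx (mul_eq_inv_smul_mul_of_mul_eq_smul_mul
    arsσ_mul_arsσinv arsσinv_mul_arsσ hs arsσ_mul_arsx) q
  rw [arsMonomial, mul_assoc, hσ, mul_smul_comm, ← mul_assoc, hρ, smul_mul_assoc, smul_smul,
    mul_assoc, mul_comm (s ^ q)]

theorem arsMonomial_mul_arsy (hr : r ≠ 0) (hs : s ≠ 0) (p q : ℤ) :
    arsMonomial K r s p q * y = (r ^ p * s ^ q)⁻¹ • (y * arsMonomial K r s p q) := by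
  have hρ : zpowOf ρ ρ⁻ p * y = r⁻¹ ^ p • (y * zpowOf ρ ρ⁻ p) :=
    zpowOf_mul_eq_smul_mul arsρ_mul_arsy (mul_eq_inv_smul_mul_of_mul_eq_smul_mul
    arsρ_mul_arsρinv arsρinv_mul_arsρ (inv_ne_zero hr) arsρ_mul_arsy) p
  have hσ : zpowOf σ σ⁻ q * y = s⁻¹ ^ q • (y * zpowOf σ σ⁻ q) :=
    zpowOf_mul_eq_smul_mul arsσ_mul_arsy (mul_eq_inv_smul_mul_of_mul_eq_smul_mul
    arsσ_mul_arsσinv arsσinv_mul_arsσ (inv_ne_zero hs) arsσ_mul_arsy) q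
  rw [arsMonomial, mul_assoc, hσ, mul_smul_comm, ← mul_assoc, hρ, smul_mul_assoc, smul_smul,
    mul_assoc, mul_inv, inv_zpow, inv_zpow, mul_comm (s ^ q)⁻¹]

theorem arsMonomial_commute {g : Ars1 K r s} (hρ : Commute ρ g) (hρinv : Commute ρ⁻ g)
    (hσ : Commute σ g) (hσinv : Commute σ⁻ g) (p q : ℤ) : Commute (arsMonomial K r s p q) g :=
  (hρ.zpowOf_left hρinv p).mul_left (hσ.zpowOf_left hσinv q)

theorem arsMonomial_mem_center_iff (hr : r ≠ 0) (hs : s ≠ 0) (hrs : r ^ 2 ≠ s ^ 2) (p q : ℤ) :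
    (∀ a, Commute (arsMonomial K r s p q) a) ↔ r ^ p * s ^ q = 1 := by
  constructor
  · intro h
    refine smul_left_injective K (arsx_mul_arsMonomial_ne_zero hr hs hrs p q) ?_
    change (r ^ p * s ^ q) • (x * _) = (1 : K) • (x * _)
    rw [one_smul, ← arsMonomial_mul_arsx hr hs, (h _).eq]
  · intro h
    have hρρinv : Commute ρ ρ⁻ := arsρ_mul_arsρinv.trans arsρinv_mul_arsρ.symm
    have hσσinv : Commute σ σ⁻ := arsσ_mul_arsσinv.trans arsσinv_mul_arsσ.symm
    refine RingQuot.commute_of_forall_commute_mkAlgHom_ι fun g => ?_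
    cases g
    · exact arsMonomial_commute (.refl _) hρρinv.symm commute_arsρ_arsσ.symm
        commute_arsρ_arsσinv.symm p q
    · exact arsMonomial_commute hρρinv (.refl _) commute_arsρinv_arsσ.symm
        commute_arsρinv_arsσinv.symm p q
    · exact arsMonomial_commute commute_arsρ_arsσ commute_arsρinv_arsσ (.refl _) hσσinv.symm p q
    · exact arsMonomial_commute commute_arsρ_arsσinv commute_arsρinv_arsσinv hσσinv (.refl _) p q
    · rw [Commute, SemiconjBy, ← arsx, arsMonomial_mul_arsx hr hs, h, one_smul]
    · rw [Commute, SemiconjBy, ← arsy, arsMonomial_mul_arsy hr hs, h, inv_one, one_smul]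

end Ars

/-- in `A_{r,s}(1)`, conjugation by `ρ` sends `x ↦ rx`, `y ↦ r⁻¹y` and
fixes `ρ, σ`; conjugation by `σ` sends `x ↦ sx`, `y ↦ s⁻¹y` and fixes `ρ, σ`; and
conjugation by `ρ^p σ^{-q}` is the identity automorphism iff `r^p = s^q` iff
`(p,q) = (0,0)`.  (Conjugation by the invertible element `c = ρ^p σ^{-q}` is the
identity iff `c` is central.) -/
theorem stmt15 {K : Type*} [Field K] (r s : K) (hr : r ≠ 0) (hs : s ≠ 0)
    (hrs2 : r ^ 2 ≠ s ^ 2) (hpq : ∀ p q : ℤ, r ^ p = s ^ q → p = 0 ∧ q = 0)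
    (p q : ℤ) :
    (arsρ K r s * arsx K r s * arsρinv K r s = r • arsx K r s) ∧
    (arsρ K r s * arsy K r s * arsρinv K r s = r⁻¹ • arsy K r s) ∧
    (arsρ K r s * arsρ K r s * arsρinv K r s = arsρ K r s) ∧
    (arsρ K r s * arsσ K r s * arsρinv K r s = arsσ K r s) ∧
    (arsσ K r s * arsx K r s * arsσinv K r s = s • arsx K r s) ∧
    (arsσ K r s * arsy K r s * arsσinv K r s = s⁻¹ • arsy K r s) ∧
    (arsσ K r s * arsρ K r s * arsσinv K r s = arsρ K r s) ∧
    (arsσ K r s * arsσ K r s * arsσinv K r s = arsσ K r s) ∧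
    ((∀ a : Ars1 K r s,
        (zpowOf (arsρ K r s) (arsρinv K r s) p * zpowOf (arsσ K r s) (arsσinv K r s) (-q)) * a
          = a * (zpowOf (arsρ K r s) (arsρinv K r s) p * zpowOf (arsσ K r s) (arsσinv K r s) (-q)))
        ↔ r ^ p = s ^ q) ∧
    ((∀ a : Ars1 K r s,
        (zpowOf (arsρ K r s) (arsρinv K r s) p * zpowOf (arsσ K r s) (arsσinv K r s) (-q)) * a
          = a * (zpowOf (arsρ K r s) (arsρinv K r s) p * zpowOf (arsσ K r s) (arsσinv K r s) (-q)))
        ↔ (p = 0 ∧ q = 0)) := by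
  have hcenter : (∀ a, Commute (arsMonomial K r s p (-q)) a) ↔ r ^ p = s ^ q := by
    rw [arsMonomial_mem_center_iff hr hs hrs2, zpow_neg, mul_inv_eq_one₀ (zpow_ne_zero q hs)]
  refine ⟨mul_mul_eq_smul_of_mul_eq_smul_mul arsρ_mul_arsρinv arsρ_mul_arsx,
    mul_mul_eq_smul_of_mul_eq_smul_mul arsρ_mul_arsρinv arsρ_mul_arsy,
    by rw [mul_assoc, arsρ_mul_arsρinv, mul_one],
    by rw [commute_arsρ_arsσ.eq, mul_assoc, arsρ_mul_arsρinv, mul_one],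
    mul_mul_eq_smul_of_mul_eq_smul_mul arsσ_mul_arsσinv arsσ_mul_arsx,
    mul_mul_eq_smul_of_mul_eq_smul_mul arsσ_mul_arsσinv arsσ_mul_arsy,
    by rw [← commute_arsρ_arsσ.eq, mul_assoc, arsσ_mul_arsσinv, mul_one],
    by rw [mul_assoc, arsσ_mul_arsσinv, mul_one], hcenter, hcenter.trans ⟨hpq p q, ?_⟩⟩
  rintro ⟨rfl, rfl⟩
  rw [zpow_zero, zpow_zero]
end
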